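/- arXiv:2510.04745 — 3 statements merged into one kernel-verified Lean document; each statement's English description precedes it below -/
import Mathlib

section
/- Let s_1,…,s_L be independent random vectors in ℝ^L whose entries are i.i.d. according to continuous (atomless) distributions, and let α_1,…,α_L ∈ ℕ^L be pairwise distinct exponent vectors. Define the L×L matrix M by M(i,j) = ∏_{k=1}^{L} (s_k(i))^{α_j(k)}. Then M has full rank almost surely. -/
/-!
The determinant of the random matrix is the polynomial
`P = det (∏ₖ X (k, i) ^ α j k)` evaluated at the entries. Each permutation contributes a single
monomial to `P`, and injectivity of `α` makes these monomials distinct, so `P ≠ 0`. By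
independence the entries have a product law with atomless factors, and the zero set of a nonzero
polynomial is null for such a law: expand in one variable, use Fubini, and note that a nonzero
one-variable polynomial has finitely many roots.
-/

open MeasureTheory ProbabilityTheory MvPolynomial

section Determinant

variable {R n σ : Type*} [CommRing R] [Fintype n] [Fintype σ]

theorem MvPolynomial.prod_prod_X_pow_perm (α : n → σ → ℕ) (τ : Equiv.Perm n) :
    ∏ i, ∏ k, (X (k, τ i) : MvPolynomial (σ × n) R) ^ α i k =
      monomial (Finsupp.equivFunOnFinite.symm fun p : σ × n => α (τ⁻¹ p.2) p.1) 1 := by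
  rw [monomial_eq, C_1, one_mul, Finsupp.prod_fintype _ _ fun _ => pow_zero _,
    Fintype.prod_prod_type_right]
  conv_rhs => rw [← Equiv.prod_comp τ]
  simp

theorem MvPolynomial.det_of_prod_X_pow_ne_zero [DecidableEq n] [Nontrivial R]
    {α : n → σ → ℕ} (hα : Function.Injective α) :
    (Matrix.of fun i j => ∏ k, (X (k, i) : MvPolynomial (σ × n) R) ^ α j k).det ≠ 0 := by
  classical
  let D (τ : Equiv.Perm n) : σ × n →₀ ℕ :=
    Finsupp.equivFunOnFinite.symm fun p => α (τ⁻¹ p.2) p.1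
  have hD (τ : Equiv.Perm n) : D τ = D 1 ↔ τ = 1 := by
    refine ⟨fun h => Equiv.ext fun j => (hα <| _root_.funext fun k => ?_).symm,
      fun h => h ▸ rfl⟩
    simpa [D, Equiv.Perm.one_def] using DFunLike.congr_fun h (k, τ j)
  have hcoeff (τ : Equiv.Perm n) :
      coeff (D 1) (∏ i, ∏ k, (X (k, τ i) : MvPolynomial (σ × n) R) ^ α i k) =
        if τ = 1 then 1 else 0 := by
    rw [prod_prod_X_pow_perm, coeff_monomial]
    exact if_congr (hD τ) rfl rfl
  intro h
  have hdet := congrArg (coeff (D 1)) h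
  simp [Matrix.det_apply, coeff_sum, coeff_smul, hcoeff] at hdet

end Determinant

theorem Polynomial.ae_eval_ne_zero {ν : Measure ℝ} [NullSingletonClass ν] {p : Polynomial ℝ}
    (hp : p ≠ 0) :
    ∀ᵐ x ∂ν, p.eval x ≠ 0 :=
  measure_mono_null (fun _ hx => not_not.mp hx)
    ((Polynomial.finite_setOfPred_isRoot hp).countable.measure_zero ν)

theorem MvPolynomial.ae_eval_ne_zero_fin {n : ℕ} (ν : Fin n → Measure ℝ)
    [∀ i, SigmaFinite (ν i)] [∀ i, NullSingletonClass (ν i)] {p : MvPolynomial (Fin n) ℝ}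
    (hp : p ≠ 0) :
    ∀ᵐ x ∂Measure.pi ν, eval x p ≠ 0 := by
  induction n with
  | zero =>
    obtain ⟨a, rfl⟩ := C_surjective (Fin 0) p
    exact .of_forall fun x => by simpa using hp
  | succ n ih =>
    set q := finSuccEquiv ℝ n p
    have hq : q.leadingCoeff ≠ 0 := by simpa [q] using hp
    have hmp := (measurePreserving_piFinSuccAbove ν 0).symm
    rw [← hmp.map_eq, MeasurableEquiv.measurableEmbedding _ |>.ae_map_iff]
    have hmeas : MeasurableSet {z : ℝ × (Fin n → ℝ) |
        eval ((MeasurableEquiv.piFinSuccAbove (fun _ => ℝ) 0).symm z) p ≠ 0} :=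
      (measurableSet_singleton 0).compl.preimage
        ((continuous_eval p).measurable.comp (MeasurableEquiv.measurable _))
    rw [Measure.ae_prod_iff_ae_ae hmeas, Measure.ae_ae_comm hmeas]
    filter_upwards [ih _ hq] with y hy
    have hqy : q.map (eval y) ≠ 0 := fun h => hy (by
      simpa [Polynomial.coeff_map] using congrArg (·.coeff q.natDegree) h)
    filter_upwards [Polynomial.ae_eval_ne_zero hqy] with a ha
    have hcons : eval (Fin.cons a y) p ≠ 0 := by rwa [eval_eq_eval_mv_eval']
    simp only [MeasurableEquiv.piFinSuccAbove_symm_apply, Fin.insertNthEquiv_zero]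
    exact hcons

theorem MvPolynomial.ae_eval_ne_zero {ι : Type*} [Fintype ι] (ν : ι → Measure ℝ)
    [∀ i, SigmaFinite (ν i)] [∀ i, NullSingletonClass (ν i)] {p : MvPolynomial ι ℝ}
    (hp : p ≠ 0) :
    ∀ᵐ x ∂Measure.pi ν, eval x p ≠ 0 := by
  let e := (Fintype.equivFin ι).symm
  rw [← (measurePreserving_piCongrLeft ν e).map_eq,
    (MeasurableEquiv.measurableEmbedding _).ae_map_iff]
  have hp' : rename e.symm p ≠ 0 :=
    (map_ne_zero_iff _ (rename_injective _ e.symm.injective)).mpr hp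
  filter_upwards [ae_eval_ne_zero_fin _ hp'] with x hx
  have hx' : x = (MeasurableEquiv.piCongrLeft (fun _ => ℝ) e x) ∘ e := by
    funext i
    exact (Equiv.piCongrLeft_apply_apply (fun _ => ℝ) e x i).symm
  rwa [hx', ← eval_rename, rename_rename, e.self_comp_symm, rename_id, AlgHom.id_apply] at hx

theorem full_rank_monomial_matrix_general
    {Ω : Type*} [MeasurableSpace Ω] (μ : Measure Ω) [IsProbabilityMeasure μ]
    (L : ℕ) (s : Fin L → Fin L → Ω → ℝ)
    (hmeas : ∀ k i, Measurable (s k i))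
    (hindep : iIndepFun
      (fun p : Fin L × Fin L => s p.1 p.2) μ)
    (hatomless : ∀ k i, NoAtoms (μ.map (s k i)))
    (α : Fin L → Fin L → ℕ) (hα : Function.Injective α) :
    ∀ᵐ ω ∂μ,
      (Matrix.of fun i j : Fin L => ∏ k, (s k i ω) ^ (α j k)).det ≠ 0 := by
  have (p : Fin L × Fin L) : IsProbabilityMeasure (μ.map (s p.1 p.2)) :=
    Measure.isProbabilityMeasure_map (hmeas p.1 p.2).aemeasurable
  have (p : Fin L × Fin L) : NullSingletonClass (μ.map (s p.1 p.2)) := hatomless p.1 p.2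
  have hlaw : μ.map (fun ω (p : Fin L × Fin L) => s p.1 p.2 ω) =
      Measure.pi fun p : Fin L × Fin L => μ.map (s p.1 p.2) :=
    hindep.map_fun_eq_pi_map fun p => (hmeas p.1 p.2).aemeasurable
  have hP := ae_eval_ne_zero (fun p : Fin L × Fin L => μ.map (s p.1 p.2))
    (det_of_prod_X_pow_ne_zero (R := ℝ) hα)
  rw [← hlaw] at hP
  filter_upwards [ae_of_ae_map (by fun_prop) hP] with ω hω
  rw [RingHom.map_det] at hω
  convert hω using 3
  ext i j
  simp

/-- Full-rank lemma: the random monomial matrix `M(i,j) = ∏ₖ (sₖ(i))^(αⱼ(k))`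
built from jointly independent entries with atomless laws and pairwise
distinct exponent vectors is full rank (nonzero determinant) almost surely. -/
theorem full_rank_monomial_matrix
    {Ω : Type*} [MeasurableSpace Ω] (μ : Measure Ω) [IsProbabilityMeasure μ]
    (L : ℕ) (s : Fin L → Fin L → Ω → ℝ)
    (hmeas : ∀ k i, Measurable (s k i))
    (hindep : iIndepFun
      (fun p : Fin L × Fin L => s p.1 p.2) μ)
    (hiid : ∀ k i i', μ.map (s k i) = μ.map (s k i'))
    (hatomless : ∀ k i, NoAtoms (μ.map (s k i)))
    (α : Fin L → Fin L → ℕ) (hα : Function.Injective α) :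
    ∀ᵐ ω ∂μ,
      (Matrix.of fun i j : Fin L => ∏ k, (s k i ω) ^ (α j k)).det ≠ 0 :=
  full_rank_monomial_matrix_general μ L s hmeas hindep hatomless α hα
end

section
/- Let p(x_1,…,x_m) be a nonzero multivariate polynomial over ℝ, and let X_1,…,X_m be independent real random variables each with an atomless (continuous) distribution. Then P(p(X_1,…,X_m) = 0) = 0. -/
/-!
Induct on the number of variables. Regard `p` as a polynomial in `x₀` whose coefficients are
polynomials in the remaining variables `y`. By Fubini it suffices that for almost every `y` the
section `{a | p(a, y) = 0}` is null. By induction the zero set of the leading coefficient is null,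
and off it the section polynomial is nonzero, so the section is finite, hence null for an atomless
law. Independence identifies the joint law of the `Xᵢ` with the product of their laws.
-/

open MeasureTheory ProbabilityTheory

namespace MvPolynomial

theorem finite_setOf_eval_cons_eq_zero {R : Type*} [CommRing R] [IsDomain R] {n : ℕ}
    {p : MvPolynomial (Fin (n + 1)) R} {y : Fin n → R}
    (hy : eval y (finSuccEquiv R n p).leadingCoeff ≠ 0) :
    {a : R | eval (Fin.cons a y) p = 0}.Finite := by
  have hne : (finSuccEquiv R n p).map (eval y) ≠ 0 := by
    intro h
    apply hy
    rw [← Polynomial.coeff_natDegree, ← Polynomial.coeff_map, h, Polynomial.coeff_zero]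
  simpa only [Polynomial.IsRoot.def, eval_eq_eval_mv_eval'] using
    Polynomial.finite_setOfPred_isRoot hne

theorem measurableSet_setOf_eval_eq_zero {n : ℕ} (p : MvPolynomial (Fin n) ℝ) :
    MeasurableSet {x : Fin n → ℝ | eval x p = 0} :=
  (continuous_eval p).measurable (measurableSet_singleton 0)

theorem measure_pi_setOf_eval_eq_zero :
    ∀ {n : ℕ} (ν : Fin n → Measure ℝ) [∀ i, SigmaFinite (ν i)] [∀ i, NullSingletonClass (ν i)]
      {p : MvPolynomial (Fin n) ℝ}, p ≠ 0 → Measure.pi ν {x | eval x p = 0} = 0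
  | 0, ν, _, _, p, hp => by
    rw [eq_C_of_isEmpty p] at hp ⊢
    simp_all
  | n + 1, ν, _, _, p, hp => by
    set e := MeasurableEquiv.piFinSuccAbove (fun _ => ℝ) 0
    have hslice (y : Fin n → ℝ) : (fun a => (a, y)) ⁻¹' (e.symm ⁻¹' {x | eval x p = 0}) =
        {a | eval (Fin.cons a y) p = 0} := by
      simp only [e, MeasurableEquiv.piFinSuccAbove_symm_apply, Fin.insertNthEquiv_zero]
      rfl
    have hlc : (finSuccEquiv ℝ n p).leadingCoeff ≠ 0 := by simpa using hp
    have hnull := measure_pi_setOf_eval_eq_zero (fun j => ν ((0 : Fin (n + 1)).succAbove j)) hlc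
    have hS := measurableSet_setOf_eval_eq_zero p
    rw [← (measurePreserving_piFinSuccAbove ν 0).symm.measure_preimage hS.nullMeasurableSet,
      Measure.prod_apply_symm (hS.preimage e.symm.measurable)]
    refine lintegral_eq_zero_of_ae_eq_zero ?_
    filter_upwards [measure_eq_zero_iff_ae_notMem.mp hnull] with y hy
    rw [hslice]
    exact (finite_setOf_eval_cons_eq_zero hy).measure_zero _

end MvPolynomial

theorem polynomial_zero_set_null_general
    {Ω : Type*} [MeasurableSpace Ω] (μ : Measure Ω)
    (m : ℕ) (p : MvPolynomial (Fin m) ℝ) (hp : p ≠ 0)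
    (X : Fin m → Ω → ℝ) (hmeas : ∀ i, Measurable (X i))
    (hindep : iIndepFun X μ)
    (hatomless : ∀ i, NoAtoms (μ.map (X i))) :
    μ {ω | MvPolynomial.eval (fun i => X i ω) p = 0} = 0 := by
  have := hindep.isProbabilityMeasure
  have := fun i => Measure.isProbabilityMeasure_map (μ := μ) (hmeas i).aemeasurable
  have : ∀ i, NullSingletonClass (μ.map (X i)) := hatomless
  have hlaw : μ.map (fun ω i => X i ω) = Measure.pi (fun i => μ.map (X i)) :=
    hindep.map_fun_eq_pi_map fun i => (hmeas i).aemeasurable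
  change μ ((fun ω i => X i ω) ⁻¹' {x | MvPolynomial.eval x p = 0}) = 0
  rw [← Measure.map_apply (measurable_pi_lambda _ hmeas)
    (MvPolynomial.measurableSet_setOf_eval_eq_zero p), hlaw]
  exact MvPolynomial.measure_pi_setOf_eval_eq_zero _ hp

/-- A nonzero multivariate real polynomial evaluated at independent random
variables with atomless distributions vanishes with probability zero. -/
theorem polynomial_zero_set_null
    {Ω : Type*} [MeasurableSpace Ω] (μ : Measure Ω) [IsProbabilityMeasure μ]
    (m : ℕ) (p : MvPolynomial (Fin m) ℝ) (hp : p ≠ 0)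
    (X : Fin m → Ω → ℝ) (hmeas : ∀ i, Measurable (X i))
    (hindep : iIndepFun X μ)
    (hatomless : ∀ i, NoAtoms (μ.map (X i))) :
    μ {ω | MvPolynomial.eval (fun i => X i ω) p = 0} = 0 :=
  polynomial_zero_set_null_general μ m p hp X hmeas hindep hatomless
end

section
/- Let D_1,…,D_m be T×T diagonal complex matrices with diagonal entries d_k(1),…,d_k(T) for matrix D_k, where all the Tm diagonal entries are jointly independent random variables with atomless distributions. Fix T pairwise distinct exponent vectors α_1,…,α_T ∈ ℕ^m. Then the T×T matrix whose j-th column is (∏_{k=1}^m D_k^{α_j(k)})·1 is invertible almost surely. -/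
open MeasureTheory ProbabilityTheory Matrix

/-!
The determinant of the random matrix is the value, at the random point `(d k i)_{k,i}`, of the
polynomial `det (∏ₖ X_{k,i} ^ α j k)_{i,j}`. This polynomial is nonzero: the permutations of the
Leibniz expansion contribute pairwise distinct monomials because `α` is injective, so nothing
cancels. By independence the random point has the product law of atomless measures, and under
such a law the zero set of a nonzero polynomial is null: singling out one variable, the leading
coefficient is almost surely nonzero by induction, and then each fibre meets only the finitely
many roots of a nonzero one-variable polynomial.
-/

universe u

namespace Finsupp

variable {n κ : Type*} [Fintype n] [Fintype κ]

theorem sum_single_perm (α : n → κ → ℕ) (τ : Equiv.Perm n) :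
    ∑ i, ∑ k, single (k, τ i) (α i k) =
      equivFunOnFinite.symm fun p : κ × n => α (τ.symm p.2) p.1 := by
  rw [equivFunOnFinite_symm_eq_sum, Fintype.sum_prod_type_right,
    ← Equiv.sum_comp τ fun i => ∑ k, single (k, i) (α (τ.symm i) k)]
  simp

theorem injective_sum_single_perm {α : n → κ → ℕ} (hα : Function.Injective α) :
    Function.Injective fun τ : Equiv.Perm n => ∑ i, ∑ k, single (k, τ i) (α i k) := by
  intro τ τ' h
  simp only [sum_single_perm, EmbeddingLike.apply_eq_iff_eq] at h
  exact Equiv.symm_bijective.injective <| Equiv.ext fun i => hα <| by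
    ext k
    exact congrFun h (k, i)

end Finsupp

namespace MvPolynomial

theorem det_monomial_ne_zero_of_injective {n σ R : Type*} [Fintype n] [DecidableEq n]
    [CommRing R] [Nontrivial R] (e : n → n → σ →₀ ℕ)
    (he : Function.Injective fun τ : Equiv.Perm n => ∑ i, e (τ i) i) :
    (of fun i j => monomial (e i j) (1 : R)).det ≠ 0 := by
  classical
  intro h
  have hcoeff := congrArg (coeff (∑ i, e i i)) h
  simp only [det_apply, of_apply, ← monomial_sum_one, coeff_sum, Units.smul_def, smul_monomial,
    coeff_monomial, coeff_zero] at hcoeff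
  rw [Finset.sum_eq_single 1] at hcoeff
  · simp at hcoeff
  · intro τ _ hτ
    rw [if_neg fun h => hτ (he (by simpa using h))]
  · simp

section MonomialMatrix

variable {n κ : Type*} [Fintype κ] (R : Type*) [CommRing R]

noncomputable def monomialMatrix (α : n → κ → ℕ) : Matrix n n (MvPolynomial (κ × n) R) :=
  of fun i j => ∏ k, X (k, i) ^ α j k

theorem monomialMatrix_eq_monomial (α : n → κ → ℕ) :
    monomialMatrix R α = of fun i j => monomial (∑ k, Finsupp.single (k, i) (α j k)) 1 := by
  ext i j
  simp [monomialMatrix, monomial_sum_one, X_pow_eq_monomial]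

theorem monomialMatrix_map_eval (α : n → κ → ℕ) (x : κ × n → R) :
    (monomialMatrix R α).map (eval x) = of fun i j => ∏ k, x (k, i) ^ α j k := by
  ext i j
  simp [monomialMatrix]

theorem det_monomialMatrix_ne_zero [Fintype n] [DecidableEq n] [Nontrivial R]
    {α : n → κ → ℕ} (hα : Function.Injective α) : (monomialMatrix R α).det ≠ 0 := by
  rw [monomialMatrix_eq_monomial]
  exact det_monomial_ne_zero_of_injective _ (Finsupp.injective_sum_single_perm hα)

end MonomialMatrix

theorem ae_eval_ne_zero_of_isEmpty {ι : Type*} [Fintype ι] [IsEmpty ι] (ν : ι → Measure ℝ)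
    {p : MvPolynomial ι ℝ} (hp : p ≠ 0) : ∀ᵐ x ∂Measure.pi ν, eval x p ≠ 0 := by
  obtain ⟨a, rfl⟩ := C_surjective ι p
  exact ae_of_all _ fun x => by simpa using hp

theorem ae_eval_ne_zero_of_option {ι : Type*} [Fintype ι] (ν : Option ι → Measure ℝ)
    [∀ i, SigmaFinite (ν i)] [NullSingletonClass (ν none)]
    (ih : ∀ p : MvPolynomial ι ℝ, p ≠ 0 → ∀ᵐ x ∂Measure.pi (fun i => ν (some i)), eval x p ≠ 0)
    {p : MvPolynomial (Option ι) ℝ} (hp : p ≠ 0) : ∀ᵐ x ∂Measure.pi ν, eval x p ≠ 0 := by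
  set q := optionEquivLeft ℝ ι p
  have hq : q.leadingCoeff ≠ 0 := by simpa [q] using hp
  rw [← Measure.pi_map_piOptionEquivProd,
    MeasurableEmbedding.ae_map_iff (MeasurableEquiv.measurableEmbedding _),
    Measure.ae_prod_iff_ae_ae]
  · filter_upwards [ih _ hq] with x hx
    have hqx : q.map (eval x) ≠ 0 := fun h => hx <| by
      rw [Polynomial.leadingCoeff, ← Polynomial.coeff_map, h, Polynomial.coeff_zero]
    filter_upwards [(Polynomial.finite_setOfPred_isRoot hqx).countable.ae_notMem (ν none)]
      with y hy
    have hxy : (MeasurableEquiv.piOptionEquivProd fun _ => ℝ).symm (x, y) =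
        fun i => Option.elim i y x := by
      ext i
      cases i <;> rfl
    rwa [hxy, optionEquivLeft_elim_eval]
  · exact measurableSet_eq_fun ((continuous_eval p).measurable.comp
      (MeasurableEquiv.measurable _)) measurable_const |>.compl

theorem ae_eval_ne_zero_of_equiv {α β : Type*} [Fintype α] [Fintype β] (e : α ≃ β)
    (ν : β → Measure ℝ) [∀ i, SigmaFinite (ν i)]
    (h : ∀ p : MvPolynomial α ℝ, p ≠ 0 → ∀ᵐ x ∂Measure.pi (fun a => ν (e a)), eval x p ≠ 0)
    {p : MvPolynomial β ℝ} (hp : p ≠ 0) : ∀ᵐ x ∂Measure.pi ν, eval x p ≠ 0 := by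
  rw [← (measurePreserving_piCongrLeft ν e).map_eq,
    MeasurableEmbedding.ae_map_iff (MeasurableEquiv.measurableEmbedding _)]
  filter_upwards [h (rename e.symm p)
    (((rename_injective _ e.symm.injective).ne_iff' (map_zero _)).2 hp)] with x hx
  have hx' : MeasurableEquiv.piCongrLeft (fun _ => ℝ) e x = x ∘ e.symm := by
    funext b
    simp [MeasurableEquiv.coe_piCongrLeft, Equiv.piCongrLeft_apply_eq_cast]
  rwa [hx', ← eval_rename]

theorem ae_eval_ne_zero_s8 {ι : Type u} [Fintype ι] (ν : ι → Measure ℝ) [∀ i, SigmaFinite (ν i)]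
    [∀ i, NullSingletonClass (ν i)] {p : MvPolynomial ι ℝ} (hp : p ≠ 0) :
    ∀ᵐ x ∂Measure.pi ν, eval x p ≠ 0 := by
  revert ν p
  refine Fintype.induction_empty_option (P := fun ι _ => ∀ (ν : ι → Measure ℝ)
    [∀ i, SigmaFinite (ν i)] [∀ i, NullSingletonClass (ν i)] {p : MvPolynomial ι ℝ}, p ≠ 0 →
    ∀ᵐ x ∂Measure.pi ν, eval x p ≠ 0) ?_ ?_ ?_ ι
  · intro α β _ e ih ν _ _ p hp
    let := Fintype.ofEquiv β e.symm
    exact ae_eval_ne_zero_of_equiv e ν (fun p hp => ih _ hp) hp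
  · intro ν _ _ p hp
    exact ae_eval_ne_zero_of_isEmpty ν hp
  · intro α _ ih ν _ _ p hp
    exact ae_eval_ne_zero_of_option ν (fun p hp => ih _ hp) hp

end MvPolynomial

theorem Matrix.noncommProd_diagonal_pow {ι n R : Type*} [Fintype n] [DecidableEq n]
    [CommSemiring R] (s : Finset ι) (f : ι → n → R) (e : ι → ℕ) (comm) :
    s.noncommProd (fun k => diagonal (f k) ^ e k) comm = diagonal (∏ k ∈ s, f k ^ e k) := by
  have h := s.map_noncommProd (fun k => f k ^ e k) (fun _ _ _ _ _ => Commute.all _ _)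
    (diagonalRingHom n R)
  rw [Finset.noncommProd_eq_prod] at h
  simpa [diagonal_pow] using h.symm

open MvPolynomial in
/-- Matrix form of the full-rank lemma: for diagonal random matrices
D₁,…,D_m with jointly independent, atomless diagonal entries, and T
pairwise distinct exponent vectors α₁,…,α_T ∈ ℕ^m, the T×T matrix whose
j-th column is `(∏ₖ Dₖ^{αⱼ(k)})·1` (i.e. with (i,j) entry
`∏ₖ dₖ(i)^{αⱼ(k)}`) is invertible almost surely. -/
theorem monomial_matrix_invertible
    {Ω : Type*} [MeasurableSpace Ω] (μ : Measure Ω) [IsProbabilityMeasure μ]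
    (m T : ℕ) (d : Fin m → Fin T → Ω → ℝ)
    (hmeas : ∀ k i, Measurable (d k i))
    (hindep : iIndepFun
      (fun p : Fin m × Fin T => d p.1 p.2) μ)
    (hatomless : ∀ k i, NoAtoms (μ.map (d k i)))
    (α : Fin T → Fin m → ℕ) (hα : Function.Injective α) :
    ∀ᵐ ω ∂μ,
      IsUnit (Matrix.of fun i j : Fin T =>
        ((Finset.univ.noncommProd
            (fun k => (Matrix.diagonal fun i' => d k i' ω) ^ (α j k))
            (fun a _ b _ _ => Commute.pow_pow
              (by simp [Commute, SemiconjBy, Matrix.diagonal_mul_diagonal, mul_comm]) _ _)) *ᵥ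
          (1 : Fin T → ℝ)) i) := by
  let x : Ω → Fin m × Fin T → ℝ := fun ω p => d p.1 p.2 ω
  have hx : Measurable x := measurable_pi_lambda _ fun p => hmeas p.1 p.2
  have hlaw : μ.map x = Measure.pi fun p => μ.map (d p.1 p.2) :=
    hindep.map_fun_eq_pi_map fun p => (hmeas p.1 p.2).aemeasurable
  have (p : Fin m × Fin T) : NullSingletonClass (μ.map (d p.1 p.2)) := hatomless p.1 p.2
  have hdet : ∀ᵐ y ∂μ.map x, eval y (monomialMatrix ℝ α).det ≠ 0 :=
    hlaw ▸ ae_eval_ne_zero_s8 _ (det_monomialMatrix_ne_zero ℝ hα)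
  filter_upwards [ae_of_ae_map hx.aemeasurable hdet] with ω hω
  rw [RingHom.map_det, RingHom.mapMatrix_apply, monomialMatrix_map_eval] at hω
  rw [isUnit_iff_isUnit_det, isUnit_iff_ne_zero]
  convert hω using 2
  ext i j
  refine (congrArg (fun M => (M *ᵥ 1) i) (noncommProd_diagonal_pow _ _ _ _)).trans ?_
  simp [mulVec_diagonal, x]
end
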